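/- arXiv:math/0209314 — 2 statements merged into one kernel-verified Lean document; each statement's English description precedes it below -/
import Mathlib

section
/- Discrete nonholonomic momentum equation: under the hypotheses that (L_d, 𝒟_d, 𝒟) is G-invariant and that the sequence (x_0, x_1, x_2) = ((t₀,q₀),(t₁,q₁),(t₂,q₂)) satisfies the extended discrete Lagrange–d'Alembert equations, for any smooth section ξ̃ of the bundle 𝔤^𝒟 (i.e. ξ̃(t,q) ∈ 𝔤 with ξ̃(t,q)_{Q̄}(t,q) ∈ 𝒟_{(t,q)} for each (t,q)), the discrete nonholonomic momentum satisfies ⟨J_d^{nh}(x₁,x₂), ξ̃⟩ − ⟨J_d^{nh}(x₀,x₁), ξ̃⟩ = ⟨Θ⁺_{L_d}(x₁,x₂), (ξ̃(x₂) − ξ̃(x₁))_{Q̄}(x₂)⟩, where ⟨J_d^{nh}(x_i,x_{i+1}), ξ̃⟩ := ⟨Θ⁺_{L_d}(x_i,x_{i+1}), ξ̃(x_{i+1})_{Q̄}(x_{i+1})⟩ (and equals ⟨Θ⁻_{L_d}(x_i,x_{i+1}), ξ̃(x_i)_{Q̄}(x_i)⟩ by invariance). -/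
noncomputable section

/-- The extended configuration space `Q̄ = ℝ × Q` with `Q = ℝⁿ`. -/
abbrev Qb (n : ℕ) := ℝ × (Fin n → ℝ)

/-- `Q̄ × Q̄`, the extended discrete state space. -/
abbrev Eb (n : ℕ) := Qb n × Qb n

/-- `D₁ L`: partial derivative with respect to `t₀`. -/
def D1 {n : ℕ} (L : Eb n → ℝ) (x : Eb n) : ℝ :=
  fderiv ℝ L x ((1, 0), (0, 0))

/-- `D₂ L`: partial derivative with respect to `q₀`, in direction `δq`. -/
def D2 {n : ℕ} (L : Eb n → ℝ) (x : Eb n) (δq : Fin n → ℝ) : ℝ :=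
  fderiv ℝ L x ((0, δq), (0, 0))

/-- `D₃ L`: partial derivative with respect to `t₁`. -/
def D3 {n : ℕ} (L : Eb n → ℝ) (x : Eb n) : ℝ :=
  fderiv ℝ L x ((0, 0), (1, 0))

/-- `D₄ L`: partial derivative with respect to `q₁`, in direction `δq`. -/
def D4 {n : ℕ} (L : Eb n → ℝ) (x : Eb n) (δq : Fin n → ℝ) : ℝ :=
  fderiv ℝ L x ((0, 0), (0, δq))

/-- The discrete Lagrangian one-form `Θ⁺ = D₄L dq₁ + D₃L dt₁`. -/
def ThetaPlus {n : ℕ} (L : Eb n → ℝ) (x : Eb n) (v : Eb n) : ℝ :=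
  D4 L x v.2.2 + D3 L x * v.2.1

/-- The discrete Lagrangian one-form `Θ⁻ = −D₂L dq₀ − D₁L dt₀`. -/
def ThetaMinus {n : ℕ} (L : Eb n → ℝ) (x : Eb n) (v : Eb n) : ℝ :=
  -(D2 L x v.1.2) - D1 L x * v.1.1

/-- The discrete energy `E⁺ = −D₃ L`. -/
def Eplus {n : ℕ} (L : Eb n → ℝ) (x : Eb n) : ℝ := -(D3 L x)

/-- The discrete energy `E⁻ = D₁ L`. -/
def Eminus {n : ℕ} (L : Eb n → ℝ) (x : Eb n) : ℝ := D1 L x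

lemma thetaPlus_eq_fderiv {n : ℕ} (L : Eb n → ℝ) (x v : Eb n) :
    ThetaPlus L x v = fderiv ℝ L x ((0 : Qb n), v.2) := by
  have h : ((0 : Qb n), v.2) =
      ((((0 : ℝ), (0 : Fin n → ℝ)), ((0 : ℝ), v.2.2)) : Eb n)
        + v.2.1 • ((((0 : ℝ), (0 : Fin n → ℝ)), ((1 : ℝ), (0 : Fin n → ℝ))) : Eb n) := by
    simp [Prod.ext_iff]
  rw [h, map_add, map_smul]
  simp [ThetaPlus, D3, D4, smul_eq_mul, mul_comm]

/-- discrete nonholonomic momentum equation.  `gen ξ` is the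
infinitesimal generator of `ξ ∈ 𝔤` (additive, with `gen` compatible with
subtraction), `L_d` is infinitesimally invariant, `ξt` is a section of `𝔤^𝒟`
(so `gen (ξt x) x ∈ 𝒟 x`), and `(x₀,x₁,x₂)` satisfies the extended discrete
Lagrange–d'Alembert equations at `x₁`.  Then
`⟨J_d^{nh}(x₁,x₂), ξt⟩ − ⟨J_d^{nh}(x₀,x₁), ξt⟩
  = ⟨Θ⁺(x₁,x₂), (ξt(x₂) − ξt(x₁))_{Q̄}(x₂)⟩`,
where `⟨J_d^{nh}(x_i,x_{i+1}), ξt⟩ = ⟨Θ⁺(x_i,x_{i+1}), ξt(x_{i+1})_{Q̄×Q̄}⟩`. -/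
theorem stmt9 (n : ℕ) (L : Eb n → ℝ) (hL : ContDiff ℝ (⊤ : ℕ∞) L)
    (𝔤 : Type*) [AddCommGroup 𝔤]
    (gen : 𝔤 → Qb n → Qb n)
    (hgensub : ∀ (ξ η : 𝔤) (x : Qb n), gen (ξ - η) x = gen ξ x - gen η x)
    (𝒟 : Qb n → Submodule ℝ (Qb n)) (𝒟d : Set (Eb n))
    (hinv : ∀ (ξ : 𝔤) (x : Eb n), fderiv ℝ L x (gen ξ x.1, gen ξ x.2) = 0)
    (ξt : Qb n → 𝔤) (hsec : ∀ x, gen (ξt x) x ∈ 𝒟 x)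
    (x₀ x₁ x₂ : Qb n)
    (hEDLA1 : ∀ v ∈ 𝒟 x₁,
      fderiv ℝ L (x₀, x₁) ((0 : Qb n), v) + fderiv ℝ L (x₁, x₂) (v, (0 : Qb n)) = 0)
    (hEDLA2 : (x₁, x₂) ∈ 𝒟d) :
    ThetaPlus L (x₁, x₂) (gen (ξt x₂) x₁, gen (ξt x₂) x₂)
        - ThetaPlus L (x₀, x₁) (gen (ξt x₁) x₀, gen (ξt x₁) x₁)
      = ThetaPlus L (x₁, x₂) ((0 : Qb n), gen (ξt x₂ - ξt x₁) x₂) := by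
  have hsub : gen (ξt x₂ - ξt x₁) x₂ = gen (ξt x₂) x₂ - gen (ξt x₁) x₂ := hgensub _ _ _
  rw [thetaPlus_eq_fderiv, thetaPlus_eq_fderiv, thetaPlus_eq_fderiv]
  simp only [hsub]
  have h1 := hEDLA1 _ (hsec x₁)
  have h2 := hinv (ξt x₁) (x₁, x₂)
  have hsplit : ((gen (ξt x₁) x₁, gen (ξt x₁) x₂) : Eb n)
      = ((gen (ξt x₁) x₁, (0 : Qb n)) : Eb n) + (((0 : Qb n), gen (ξt x₁) x₂) : Eb n) := by
    simp
  rw [hsplit, map_add] at h2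
  have hsub2 : (((0 : Qb n), gen (ξt x₂) x₂ - gen (ξt x₁) x₂) : Eb n)
      = (((0 : Qb n), gen (ξt x₂) x₂) : Eb n) - (((0 : Qb n), gen (ξt x₁) x₂) : Eb n) := by
    simp
  rw [hsub2, map_sub]
  linarith
end
end

section
/- Symplecticity of extended variational integrators: Let L_d : Q̄ × Q̄ → ℝ (Q̄ = ℝ × ℝ^n) be smooth and suppose Φ : Q̄ × Q̄ → Q̄ × Q̄ is a smooth map such that for every x = (t₀,q₀,t₁,q₁), the triple (x, Φ(x)) satisfies the extended discrete Euler–Lagrange equations (i.e. Φ(x) = (t₁,q₁,t₂,q₂) with D₂L_d(t₁,q₁,t₂,q₂) + D₄L_d(t₀,q₀,t₁,q₁) = 0 and D₁L_d(t₁,q₁,t₂,q₂) + D₃L_d(t₀,q₀,t₁,q₁) = 0). Then the two-step restricted action Ŝ(x) = L_d(x) + L_d(Φ(x)) satisfies dŜ = Φ^*Θ⁺_{L_d} − Θ⁻_{L_d}, and consequently Φ^* Ω_{L_d} = Ω_{L_d}, where Ω_{L_d} = −dΘ⁺_{L_d} = −dΘ⁻_{L_d}. -/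
noncomputable section

/-- The extended discrete Lagrangian two-form `Ω_{L_d} = −dΘ⁺_{L_d}`, expressed
at a point on a pair of (constant) vectors `u`, `v` by the flat-space formula
`dθ(u,v) = ∂_u(θ(·)(v)) − ∂_v(θ(·)(u))`. -/
def OmegaL {n : ℕ} (L : Eb n → ℝ) (x : Eb n) (u v : Eb n) : ℝ :=
  -(fderiv ℝ (fun y => ThetaPlus L y v) x u - fderiv ℝ (fun y => ThetaPlus L y u) x v)

/-- Projection onto second `Q̄` factor as a continuous linear map. -/
def Pc (n : ℕ) : Eb n →L[ℝ] Eb n :=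
  (0 : Eb n →L[ℝ] Qb n).prod (ContinuousLinearMap.snd ℝ (Qb n) (Qb n))

/-- Projection onto first `Q̄` factor as a continuous linear map. -/
def Mc (n : ℕ) : Eb n →L[ℝ] Eb n :=
  (ContinuousLinearMap.fst ℝ (Qb n) (Qb n)).prod (0 : Eb n →L[ℝ] Qb n)

lemma Pc_apply {n : ℕ} (v : Eb n) : Pc n v = ((0, 0), v.2) := rfl
lemma Mc_apply {n : ℕ} (v : Eb n) : Mc n v = (v.1, (0, 0)) := rfl

lemma Pc_add_Mc {n : ℕ} (v : Eb n) : Pc n v + Mc n v = v := by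
  simp [Pc_apply, Mc_apply, Prod.ext_iff]

lemma eval_snd {n : ℕ} (f : Eb n → ℝ) (y : Eb n) (w : Qb n) :
    fderiv ℝ f y ((0, 0), w) = D4 f y w.2 + D3 f y * w.1 := by
  have h : (((0, 0), w) : Eb n) = ((0, 0), (0, w.2)) + w.1 • ((0, 0), (1, 0)) := by
    simp [Prod.ext_iff]
  rw [h, map_add, map_smul, D4, D3]
  simp [mul_comm]

lemma eval_fst {n : ℕ} (f : Eb n → ℝ) (y : Eb n) (w : Qb n) :
    fderiv ℝ f y (w, (0, 0)) = D2 f y w.2 + D1 f y * w.1 := by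
  have h : ((w, (0, 0)) : Eb n) = ((0, w.2), (0, 0)) + w.1 • ((1, 0), (0, 0)) := by
    simp [Prod.ext_iff]
  rw [h, map_add, map_smul, D2, D1]
  simp [mul_comm]

lemma thetaPlus_eq {n : ℕ} (L : Eb n → ℝ) (y v : Eb n) :
    ThetaPlus L y v = fderiv ℝ L y (Pc n v) := by
  rw [ThetaPlus, Pc_apply, eval_snd]

lemma thetaMinus_eq {n : ℕ} (L : Eb n → ℝ) (y v : Eb n) :
    ThetaMinus L y v = -fderiv ℝ L y (Mc n v) := by
  rw [ThetaMinus, Mc_apply, eval_fst]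
  ring


set_option maxHeartbeats 2000000

/-- symplecticity of extended variational integrators.  If
`Φ : Q̄ × Q̄ → Q̄ × Q̄` is a smooth map such that `(x, Φ(x))` always satisfies the
extended discrete Euler–Lagrange equations, then the two-step restricted action
`Ŝ(x) = L_d(x) + L_d(Φ(x))` satisfies `dŜ = Φ^*Θ⁺ − Θ⁻`; moreover
`dΘ⁺ = dΘ⁻` (so `Ω = −dΘ⁺ = −dΘ⁻` is well defined) and `Φ^*Ω = Ω`. -/
theorem stmt13 (n : ℕ) (L : Eb n → ℝ) (hL : ContDiff ℝ (⊤ : ℕ∞) L)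
    (Φ : Eb n → Eb n) (hΦ : ContDiff ℝ (⊤ : ℕ∞) Φ)
    (hstep : ∀ x : Eb n, (Φ x).1 = x.2)
    (hEL2 : ∀ (x : Eb n) (δq : Fin n → ℝ), D2 L (Φ x) δq + D4 L x δq = 0)
    (hEL1 : ∀ x : Eb n, D1 L (Φ x) + D3 L x = 0) :
    (∀ x v : Eb n,
      fderiv ℝ (fun y => L y + L (Φ y)) x v
        = ThetaPlus L (Φ x) (fderiv ℝ Φ x v) - ThetaMinus L x v) ∧
    (∀ x u v : Eb n,
      fderiv ℝ (fun y => ThetaPlus L y v) x u - fderiv ℝ (fun y => ThetaPlus L y u) x v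
        = fderiv ℝ (fun y => ThetaMinus L y v) x u
            - fderiv ℝ (fun y => ThetaMinus L y u) x v) ∧
    (∀ x u v : Eb n,
      OmegaL L (Φ x) (fderiv ℝ Φ x u) (fderiv ℝ Φ x v) = OmegaL L x u v) := by
  -- abbreviations
  have hL1 : Differentiable ℝ L := hL.differentiable (by simp)
  have hΦ1 : Differentiable ℝ Φ := hΦ.differentiable (by simp)
  have hL' : ContDiff ℝ (⊤ : ℕ∞) (fderiv ℝ L) := hL.fderiv_right (by simp)
  have hΦ' : ContDiff ℝ (⊤ : ℕ∞) (fderiv ℝ Φ) := hΦ.fderiv_right (by simp)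
  have hL'1 : Differentiable ℝ (fderiv ℝ L) := hL'.differentiable (by simp)
  have hΦ'1 : Differentiable ℝ (fderiv ℝ Φ) := hΦ'.differentiable (by simp)
  -- derivative of `Φ` maps the first component to the second of the input
  have hA1 : ∀ (y v : Eb n), (fderiv ℝ Φ y v).1 = v.2 := by
    intro y v
    have h1 : HasFDerivAt (fun z : Eb n => (Φ z).1)
        ((ContinuousLinearMap.fst ℝ (Qb n) (Qb n)).comp (fderiv ℝ Φ y)) y :=
      (hasFDerivAt_fst).comp y (hΦ1 y).hasFDerivAt
    have h2 : HasFDerivAt (fun z : Eb n => (Φ z).1)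
        (ContinuousLinearMap.snd ℝ (Qb n) (Qb n)) y := by
      have : (fun z : Eb n => (Φ z).1) = fun z : Eb n => z.2 := funext hstep
      rw [this]; exact hasFDerivAt_snd
    have := h1.unique h2
    calc (fderiv ℝ Φ y v).1
        = ((ContinuousLinearMap.fst ℝ (Qb n) (Qb n)).comp (fderiv ℝ Φ y)) v := rfl
      _ = v.2 := by rw [this]; rfl
  -- key pointwise identity coming from the discrete Euler–Lagrange equations
  have hS1 : ∀ (y v : Eb n),
      fderiv ℝ L y (Pc n v) + fderiv ℝ L (Φ y) (Mc n (fderiv ℝ Φ y v)) = 0 := by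
    intro y v
    rw [Pc_apply, Mc_apply, eval_snd, eval_fst, hA1]
    have e1 := hEL2 y v.2.2
    have e2 := hEL1 y
    linear_combination e1 + v.2.1 * e2
  -- second derivatives
  set F2 : Eb n → Eb n →L[ℝ] Eb n →L[ℝ] ℝ := fderiv ℝ (fderiv ℝ L) with hF2
  have hF2sym : ∀ (y : Eb n) (a b : Eb n), F2 y a b = F2 y b a := by
    intro y a b
    exact second_derivative_symmetric (fun z => (hL1 z).hasFDerivAt)
      ((hL'1 y).hasFDerivAt) a b
  -- derivative of `y ↦ fderiv L y w` for constant `w`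
  have hEval : ∀ (y : Eb n) (w u : Eb n),
      fderiv ℝ (fun z => fderiv ℝ L z w) y u = F2 y u w := by
    intro y w u
    rw [fderiv_clm_apply (hL'1 y) (differentiableAt_const w)]
    simp [hF2]
  -- Part 1 (pointwise in y)
  have part1 : ∀ (y v : Eb n),
      fderiv ℝ (fun z => L z + L (Φ z)) y v
        = ThetaPlus L (Φ y) (fderiv ℝ Φ y v) - ThetaMinus L y v := by
    intro y v
    have hcomp : DifferentiableAt ℝ (fun z => L (Φ z)) y := (hL1 (Φ y)).comp y (hΦ1 y)
    have hfd : fderiv ℝ (fun z => L z + L (Φ z)) y v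
        = fderiv ℝ L y v + fderiv ℝ L (Φ y) (fderiv ℝ Φ y v) := by
      rw [fderiv_fun_add (hL1 y) hcomp]
      have : fderiv ℝ (fun z => L (Φ z)) y
          = (fderiv ℝ L (Φ y)).comp (fderiv ℝ Φ y) := fderiv_comp y (hL1 (Φ y)) (hΦ1 y)
      simp [this]
    rw [hfd, thetaPlus_eq, thetaMinus_eq]
    have d1 : fderiv ℝ L y v = fderiv ℝ L y (Pc n v) + fderiv ℝ L y (Mc n v) := by
      rw [← map_add, Pc_add_Mc]
    have d2 : fderiv ℝ L (Φ y) (fderiv ℝ Φ y v)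
        = fderiv ℝ L (Φ y) (Pc n (fderiv ℝ Φ y v))
          + fderiv ℝ L (Φ y) (Mc n (fderiv ℝ Φ y v)) := by
      rw [← map_add, Pc_add_Mc]
    have := hS1 y v
    linarith
  -- rewriting of the one-form functions
  have hTP : ∀ v : Eb n, (fun y : Eb n => ThetaPlus L y v)
      = fun y => fderiv ℝ L y (Pc n v) := fun v => funext fun y => thetaPlus_eq L y v
  have hTM : ∀ v : Eb n, (fun y : Eb n => ThetaMinus L y v)
      = fun y => -fderiv ℝ L y (Mc n v) := fun v => funext fun y => thetaMinus_eq L y v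
  have hdTP : ∀ (y u v : Eb n),
      fderiv ℝ (fun z => ThetaPlus L z v) y u = F2 y u (Pc n v) := by
    intro y u v; rw [hTP v, hEval]
  have hdTM : ∀ (y u v : Eb n),
      fderiv ℝ (fun z => ThetaMinus L z v) y u = -F2 y u (Mc n v) := by
    intro y u v
    rw [hTM v]
    have : DifferentiableAt ℝ (fun z => fderiv ℝ L z (Mc n v)) y :=
      (hL'1 y).clm_apply (differentiableAt_const _)
    rw [fderiv_fun_neg]
    simp only [ContinuousLinearMap.neg_apply]
    rw [hEval]
  -- Part 2
  have part2 : ∀ (x u v : Eb n),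
      fderiv ℝ (fun y => ThetaPlus L y v) x u - fderiv ℝ (fun y => ThetaPlus L y u) x v
        = fderiv ℝ (fun y => ThetaMinus L y v) x u
            - fderiv ℝ (fun y => ThetaMinus L y u) x v := by
    intro x u v
    rw [hdTP, hdTP, hdTM, hdTM]
    have e1 : F2 x u (Pc n v) + F2 x u (Mc n v) = F2 x u v := by rw [← map_add, Pc_add_Mc]
    have e2 : F2 x v (Pc n u) + F2 x v (Mc n u) = F2 x v u := by rw [← map_add, Pc_add_Mc]
    have e3 := hF2sym x u v
    linarith
  -- Part 3
  have part3 : ∀ (x u v : Eb n),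
      OmegaL L (Φ x) (fderiv ℝ Φ x u) (fderiv ℝ Φ x v) = OmegaL L x u v := by
    intro x u v
    set A := fderiv ℝ Φ x with hA
    set G2 : Eb n →L[ℝ] Eb n →L[ℝ] Eb n := fderiv ℝ (fderiv ℝ Φ) x with hG2
    have hG2sym : ∀ a b : Eb n, G2 a b = G2 b a := fun a b =>
      second_derivative_symmetric (fun z => (hΦ1 z).hasFDerivAt) ((hΦ'1 x).hasFDerivAt) a b
    -- the function R_w
    set R : Eb n → Eb n → ℝ :=
      fun w y => fderiv ℝ L (Φ y) (Pc n (fderiv ℝ Φ y w)) with hR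
    -- direct computation of the derivative of R w at x
    have hcΦ : DifferentiableAt ℝ (fun y => fderiv ℝ L (Φ y)) x :=
      (hL'1 (Φ x)).comp x (hΦ1 x)
    have hcΦ' : fderiv ℝ (fun y => fderiv ℝ L (Φ y)) x = (F2 (Φ x)).comp A :=
      fderiv_comp x (hL'1 (Φ x)) (hΦ1 x)
    have hinner : ∀ w : Eb n, DifferentiableAt ℝ (fun y => Pc n (fderiv ℝ Φ y w)) x :=
      fun w => (Pc n).differentiable.differentiableAt.comp x
        ((hΦ'1 x).clm_apply (differentiableAt_const w))
    have hinner' : ∀ w u : Eb n,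
        fderiv ℝ (fun y => Pc n (fderiv ℝ Φ y w)) x u = Pc n (G2 u w) := by
      intro w u
      rw [fderiv_clm_apply (differentiableAt_const (Pc n))
        ((hΦ'1 x).clm_apply (differentiableAt_const w))]
      rw [fderiv_clm_apply (hΦ'1 x) (differentiableAt_const w)]
      simp [hG2]
    have hdirect : ∀ w u : Eb n,
        fderiv ℝ (R w) x u
          = fderiv ℝ L (Φ x) (Pc n (G2 u w)) + F2 (Φ x) (A u) (Pc n (A w)) := by
      intro w u
      rw [hR]
      rw [fderiv_clm_apply hcΦ (hinner w)]
      simp only [ContinuousLinearMap.add_apply, ContinuousLinearMap.coe_comp',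
        Function.comp_apply, ContinuousLinearMap.flip_apply]
      rw [hinner' w u, hcΦ']
      rfl
    -- computation via part 1
    set f : Eb n → ℝ := fun z => L z + L (Φ z) with hf
    have hfC : ContDiff ℝ (⊤ : ℕ∞) f := hL.add (hL.comp hΦ)
    have hf1 : Differentiable ℝ f := hfC.differentiable (by simp)
    have hf'1 : Differentiable ℝ (fderiv ℝ f) := (hfC.fderiv_right (m := (⊤ : ℕ∞)) (by simp)).differentiable (by simp)
    have hFf : ∀ a b : Eb n, fderiv ℝ (fderiv ℝ f) x a b = fderiv ℝ (fderiv ℝ f) x b a :=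
      fun a b => second_derivative_symmetric (fun z => (hf1 z).hasFDerivAt)
        ((hf'1 x).hasFDerivAt) a b
    have hRalt : ∀ w : Eb n, R w = fun y =>
        fderiv ℝ f y w - fderiv ℝ L y (Mc n w) := by
      intro w; funext y
      have := part1 y w
      rw [thetaPlus_eq, thetaMinus_eq] at this
      rw [hR]
      -- this : fderiv f y w = fderiv L (Φ y) (Pc (...)) - - fderiv L y (Mc w)
      simp only [hf]
      linarith [this]
    have hvia : ∀ w u : Eb n,
        fderiv ℝ (R w) x u = fderiv ℝ (fderiv ℝ f) x u w - F2 x u (Mc n w) := by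
      intro w u
      rw [hRalt w]
      have d1 : DifferentiableAt ℝ (fun y => fderiv ℝ f y w) x :=
        (hf'1 x).clm_apply (differentiableAt_const w)
      have d2 : DifferentiableAt ℝ (fun y => fderiv ℝ L y (Mc n w)) x :=
        (hL'1 x).clm_apply (differentiableAt_const _)
      rw [fderiv_fun_sub d1 d2]
      simp only [ContinuousLinearMap.coe_sub', Pi.sub_apply]
      congr 1
      · rw [fderiv_clm_apply (hf'1 x) (differentiableAt_const w)]; simp
      · exact hEval x (Mc n w) u
    -- antisymmetrized identity
    have key : F2 (Φ x) (A u) (Pc n (A v)) - F2 (Φ x) (A v) (Pc n (A u))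
        = -(F2 x u (Mc n v)) + F2 x v (Mc n u) := by
      have h1 := (hdirect v u).symm.trans (hvia v u)
      have h2 := (hdirect u v).symm.trans (hvia u v)
      have h3 := hG2sym u v
      have h4 := hFf u v
      rw [h3] at h1
      linarith [h1, h2, h4]
    -- relate to Pc via part-2 style identity at x
    have e1 : F2 x u (Pc n v) + F2 x u (Mc n v) = F2 x u v := by rw [← map_add, Pc_add_Mc]
    have e2 : F2 x v (Pc n u) + F2 x v (Mc n u) = F2 x v u := by rw [← map_add, Pc_add_Mc]
    have e3 := hF2sym x u v
    rw [OmegaL, OmegaL, hdTP, hdTP, hdTP, hdTP]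
    have : F2 (Φ x) (A u) (Pc n (A v)) - F2 (Φ x) (A v) (Pc n (A u))
        = F2 x u (Pc n v) - F2 x v (Pc n u) := by linarith
    rw [hA]
    linarith [this]
  exact ⟨part1, part2, part3⟩
end
end
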